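/- Let F be the Pareto cdf F(x) = 1 − 1/x for x ≥ 1 (and F(x) = 0 for x < 1), and let G be the Pareto cdf G(y) = 1 − 2/y for y ≥ 2 (and G(y) = 0 for y < 2). Then for every p ∈ (0,1): sup{VaR^R_p(X+Y) : (X,Y) ∈ F^o_2(F,G)} = 4/(1−p) and inf{VaR^L_p(X+Y) : (X,Y) ∈ F^o_2(F,G)} = 1 + 2/(1−p). -/

import Mathlib

open MeasureTheory Set Filter
open scoped ENNReal NNReal

noncomputable section

variable {Ω : Type*} [MeasurableSpace Ω]

/-- A cumulative distribution function on `ℝ`. -/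
structure IsCDF (F : ℝ → ℝ) : Prop where
  mono : Monotone F
  right_cont : ∀ x, ContinuousWithinAt F (Set.Ici x) x
  tendsto_atBot : Filter.Tendsto F Filter.atBot (nhds 0)
  tendsto_atTop : Filter.Tendsto F Filter.atTop (nhds 1)

/-- The probability space is atomless. -/
def Atomless (μ : Measure Ω) : Prop :=
  ∀ s : Set Ω, MeasurableSet s → 0 < μ s →
    ∃ t : Set Ω, MeasurableSet t ∧ t ⊆ s ∧ 0 < μ t ∧ μ t < μ s

/-- The distribution function of a random variable. -/
def distFun (μ : Measure Ω) (X : Ω → ℝ) : ℝ → ℝ :=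
  fun x => (μ {ω | X ω ≤ x}).toReal

/-- `X` is a random variable distributed according to `F`. -/
def HasCDF (μ : Measure Ω) (X : Ω → ℝ) (F : ℝ → ℝ) : Prop :=
  Measurable X ∧ ∀ x, distFun μ X x = F x

/-- Stochastic order `F ≤_st G`, i.e. `G(x) ≤ F(x)` for all `x`. -/
def StOrder (F G : ℝ → ℝ) : Prop := ∀ x, G x ≤ F x

/-- The ordered-coupling set `F^o_2(F,G)`: `X ~ F`, `Y ~ G`, `X ≤ Y` a.s. -/
def OrderedCoupling (μ : Measure Ω) (F G : ℝ → ℝ) (X Y : Ω → ℝ) : Prop :=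
  HasCDF μ X F ∧ HasCDF μ Y G ∧ ∀ᵐ ω ∂μ, X ω ≤ Y ω

/-- The directional lower (DL) coupling distribution function `D_*^{F,G}`. -/
def DLdf (F G : ℝ → ℝ) (x y : ℝ) : ℝ :=
  if y ≤ x then G y else F x - sInf ((fun z => F z - G z) '' Set.Icc x y)

/-- `(X,Y)` is DL-coupled: its joint distribution function is `D_*^{F,G}`. -/
def IsDLCoupled (μ : Measure Ω) (F G : ℝ → ℝ) (X Y : Ω → ℝ) : Prop :=
  ∀ x y : ℝ, (μ {ω | X ω ≤ x ∧ Y ω ≤ y}).toReal = DLdf F G x y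

/-- The Pareto cdf `F(x) = 1 − 1/x` for `x ≥ 1`, `0` otherwise. -/
def paretoF : ℝ → ℝ := fun x => if 1 ≤ x then 1 - 1 / x else 0

/-- The Pareto cdf `G(y) = 1 − 2/y` for `y ≥ 2`, `0` otherwise. -/
def paretoG : ℝ → ℝ := fun y => if 2 ≤ y then 1 - 2 / y else 0

/-- The left quantile `H^{-1}(p) = inf {t | H t ≥ p}`, the left Value-at-Risk
`VaR^L_p(H)` at level `p`. -/
def quantL (H : ℝ → ℝ) (p : ℝ) : ℝ := sInf {t : ℝ | p ≤ H t}

/-- The right quantile `H^{-1}(p+) = inf {t | H t > p}`, the right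
Value-at-Risk `VaR^R_p(H)` at level `p`. -/
def quantR (H : ℝ → ℝ) (p : ℝ) : ℝ := sInf {t : ℝ | p < H t}

lemma atomless_half {μ : Measure Ω} [IsFiniteMeasure μ] (hμ : Atomless μ) {s : Set Ω}
    (hs : MeasurableSet s) (h0 : 0 < μ s) :
    ∃ t : Set Ω, MeasurableSet t ∧ t ⊆ s ∧ 0 < μ t ∧ 2 * μ t ≤ μ s := by
  obtain ⟨t, ht, hts, h0t, hlt⟩ := hμ s hs h0
  rcases le_or_gt (2 * μ t) (μ s) with h | h
  · exact ⟨t, ht, hts, h0t, h⟩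
  · refine ⟨s \ t, hs.diff ht, diff_subset, ?_, ?_⟩
    · rw [measure_diff hts ht.nullMeasurableSet (measure_ne_top μ t)]
      exact tsub_pos_of_lt hlt
    · rw [measure_diff hts ht.nullMeasurableSet (measure_ne_top μ t), two_mul]
      have h1 : μ s ≤ μ t + μ t := by
        rw [← two_mul]; exact h.le
      calc μ s - μ t + (μ s - μ t) ≤ μ s - μ t + μ t := by
            gcongr
            exact tsub_le_iff_right.mpr h1
        _ = μ s := tsub_add_cancel_of_le (measure_mono hts)

lemma atomless_small {μ : Measure Ω} [IsProbabilityMeasure μ] (hμ : Atomless μ) {s : Set Ω}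
    (hs : MeasurableSet s) (h0 : 0 < μ s) {ε : ℝ≥0∞} (hε : 0 < ε) :
    ∃ t : Set Ω, MeasurableSet t ∧ t ⊆ s ∧ 0 < μ t ∧ μ t ≤ ε := by
  have key : ∀ n : ℕ, ∃ t : Set Ω, MeasurableSet t ∧ t ⊆ s ∧ 0 < μ t ∧ μ t ≤ 2⁻¹ ^ n := by
    intro n
    induction n with
    | zero => exact ⟨s, hs, subset_rfl, h0, by simpa using prob_le_one⟩
    | succ n ih =>
      obtain ⟨t, ht, hts, h0t, hle⟩ := ih
      obtain ⟨u, hu, hut, h0u, h2u⟩ := atomless_half hμ ht h0t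
      refine ⟨u, hu, hut.trans hts, h0u, ?_⟩
      have h1 : μ u = 2⁻¹ * (2 * μ u) := by
        rw [← mul_assoc, ENNReal.inv_mul_cancel (by norm_num) (by norm_num), one_mul]
      rw [pow_succ]
      calc μ u = 2⁻¹ * (2 * μ u) := h1
        _ ≤ 2⁻¹ * 2⁻¹ ^ n := by gcongr; exact le_trans h2u hle
        _ = 2⁻¹ ^ n * 2⁻¹ := mul_comm _ _
  obtain ⟨n, hn⟩ := ENNReal.exists_inv_two_pow_lt hε.ne'
  obtain ⟨t, ht, hts, h0t, hle⟩ := key n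
  exact ⟨t, ht, hts, h0t, hle.trans hn.le⟩

/-- Sierpiński: an atomless probability measure takes every value below `μ s` inside `s`. -/
lemma sierpinski {μ : Measure Ω} [IsProbabilityMeasure μ] (hμ : Atomless μ) {s : Set Ω}
    (hs : MeasurableSet s) {r : ℝ≥0∞} (hr : r ≤ μ s) :
    ∃ t : Set Ω, MeasurableSet t ∧ t ⊆ s ∧ μ t = r := by
  classical
  set good : Set Ω → Prop := fun t => MeasurableSet t ∧ t ⊆ s ∧ μ t ≤ r with hgood
  have step_ex : ∀ t : Set Ω, good t → ∃ u : Set Ω, MeasurableSet u ∧ u ⊆ s \ t ∧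
      μ t + μ u ≤ r ∧ ∀ u' : Set Ω, MeasurableSet u' → u' ⊆ s \ t → μ t + μ u' ≤ r →
        μ u' ≤ 2 * μ u := by
    intro t ht
    set C : Set ℝ≥0∞ := {m | ∃ u : Set Ω, MeasurableSet u ∧ u ⊆ s \ t ∧ μ t + μ u ≤ r ∧ μ u = m}
      with hC
    have h0C : (0 : ℝ≥0∞) ∈ C := ⟨∅, MeasurableSet.empty, empty_subset _, by
      simpa using ht.2.2, measure_empty⟩
    set m := sSup C with hm
    rcases eq_or_ne m 0 with hm0 | hm0
    · refine ⟨∅, MeasurableSet.empty, empty_subset _, by simpa using ht.2.2, ?_⟩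
      intro u' hu' hsub hle
      have : μ u' ≤ m := le_sSup ⟨u', hu', hsub, hle, rfl⟩
      simpa [hm0] using this
    · have hmr : m ≤ r := sSup_le (fun b hb => by
        obtain ⟨u, hu, hsub, hle, rfl⟩ := hb
        exact le_trans le_add_self hle)
      have hmtop : m ≠ ⊤ :=
        (lt_of_le_of_lt (hmr.trans (hr.trans prob_le_one)) ENNReal.one_lt_top).ne
      have hhalf : m / 2 < m := ENNReal.half_lt_self hm0 hmtop
      obtain ⟨b, hbC, hb⟩ := lt_sSup_iff.mp hhalf
      obtain ⟨u, hu, hsub, hle, rfl⟩ := hbC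
      refine ⟨u, hu, hsub, hle, ?_⟩
      intro u' hu' hsub' hle'
      have h1 : μ u' ≤ m := le_sSup ⟨u', hu', hsub', hle', rfl⟩
      have h2 : m ≤ 2 * μ u := by
        calc m = 2 * (m / 2) := (ENNReal.mul_div_cancel' (by norm_num) (by norm_num)).symm
          _ ≤ 2 * μ u := mul_le_mul_right hb.le 2
      exact h1.trans h2
  set step : Set Ω → Set Ω := fun t =>
    if h : good t then t ∪ Classical.choose (step_ex t h) else t with hstep
  set T : ℕ → Set Ω := fun n => step^[n] ∅ with hT
  have hT0 : T 0 = ∅ := rfl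
  have hTsucc : ∀ n, T (n + 1) = step (T n) := fun n => Function.iterate_succ_apply' step n ∅
  have hgoodT : ∀ n, good (T n) := by
    intro n
    induction n with
    | zero =>
      rw [hT0]
      exact ⟨MeasurableSet.empty, empty_subset _, by simp⟩
    | succ n ih =>
      rw [hTsucc, hstep]
      simp only [dif_pos ih]
      obtain ⟨hu, hsub, hle, _⟩ := Classical.choose_spec (step_ex (T n) ih)
      refine ⟨ih.1.union hu, union_subset ih.2.1 (hsub.trans diff_subset), ?_⟩
      calc μ (T n ∪ _) ≤ μ (T n) + μ _ := measure_union_le _ _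
        _ ≤ r := hle
  have hmono : ∀ n, T n ⊆ T (n + 1) := by
    intro n
    rw [hTsucc, hstep]
    simp only [dif_pos (hgoodT n)]
    exact subset_union_left
  have hmono' : Monotone T := monotone_nat_of_le_succ hmono
  set A := ⋃ n, T n with hA
  have hAmeas : MeasurableSet A := MeasurableSet.iUnion (fun n => (hgoodT n).1)
  have hAsub : A ⊆ s := iUnion_subset (fun n => (hgoodT n).2.1)
  have hAle : μ A ≤ r := by
    rw [hA, Directed.measure_iUnion (hmono'.directed_le)]
    exact iSup_le (fun n => (hgoodT n).2.2)
  refine ⟨A, hAmeas, hAsub, ?_⟩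
  by_contra hne
  have hAlt : μ A < r := lt_of_le_of_ne hAle hne
  -- find a small positive piece of s \ A
  have hsA : 0 < μ (s \ A) := by
    rw [measure_diff hAsub hAmeas.nullMeasurableSet (measure_ne_top μ A)]
    exact tsub_pos_of_lt (lt_of_lt_of_le hAlt hr)
  obtain ⟨u, hu, husub, h0u, hule⟩ :=
    atomless_small hμ (hs.diff hAmeas) hsA (tsub_pos_of_lt hAlt)
  -- u is a candidate at every stage
  have hcand : ∀ n, μ u ≤ 2 * μ (Classical.choose (step_ex (T n) (hgoodT n))) := by
    intro n
    obtain ⟨_, _, _, hmax⟩ := Classical.choose_spec (step_ex (T n) (hgoodT n))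
    refine hmax u hu (husub.trans ?_) ?_
    · exact diff_subset_diff_right (subset_iUnion T n)
    · calc μ (T n) + μ u ≤ μ A + (r - μ A) :=
            add_le_add (measure_mono (subset_iUnion T n)) hule
        _ = r := add_tsub_cancel_of_le hAlt.le
  have hgrow : ∀ n, μ u ≤ 2 * (μ (T (n + 1)) - μ (T n)) := by
    intro n
    have h := hcand n
    rw [hTsucc, hstep]
    simp only [dif_pos (hgoodT n)]
    obtain ⟨humeas, hsub, _, _⟩ := Classical.choose_spec (step_ex (T n) (hgoodT n))
    have hdisj : Disjoint (T n) (Classical.choose (step_ex (T n) (hgoodT n))) :=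
      Disjoint.mono_right hsub disjoint_sdiff_right
    rw [measure_union hdisj humeas, ENNReal.add_sub_cancel_left (measure_ne_top μ _)]
    exact h
  -- then μ (T n) ≥ n * (μ u / 2), contradiction
  have hlin : ∀ n : ℕ, (n : ℝ≥0∞) * (μ u / 2) ≤ μ (T n) := by
    intro n
    induction n with
    | zero => simp
    | succ n ih =>
      have h2 : μ u / 2 ≤ μ (T (n + 1)) - μ (T n) := by
        have h3 := hgrow n
        rw [ENNReal.div_le_iff_le_mul (Or.inl (by norm_num)) (Or.inl (by norm_num))]
        rw [mul_comm] at h3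
        exact h3
      push_cast
      calc ((n : ℝ≥0∞) + 1) * (μ u / 2) = (n : ℝ≥0∞) * (μ u / 2) + μ u / 2 := by ring
        _ ≤ μ (T n) + (μ (T (n + 1)) - μ (T n)) := by gcongr
        _ = μ (T (n + 1)) := add_tsub_cancel_of_le (measure_mono (hmono n))
  have hu2 : (0 : ℝ≥0∞) < μ u / 2 := ENNReal.div_pos h0u.ne' (by norm_num)
  have hfin : r / (μ u / 2) ≠ ⊤ := by
    have hrne : r ≠ ⊤ := (lt_of_le_of_lt (hr.trans prob_le_one) ENNReal.one_lt_top).ne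
    exact (ENNReal.div_lt_top hrne hu2.ne').ne
  obtain ⟨n, hn⟩ := ENNReal.exists_nat_gt hfin
  have hlt : r < (n : ℝ≥0∞) * (μ u / 2) := by
    rw [ENNReal.div_lt_iff (Or.inl hu2.ne') (Or.inl ((ENNReal.div_lt_top (measure_ne_top μ u) (by norm_num)).ne))] at hn
    exact hn
  exact absurd ((hgoodT n).2.2) (not_le.mpr (lt_of_lt_of_le hlt (hlin n)))

section UnifConstruction

open Classical in
/-- A measurable half (in measure) of a measurable set. -/
def halfSet (μ : Measure Ω) (hμ : Atomless μ) [IsProbabilityMeasure μ] (s : Set Ω) : Set Ω :=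
  if h : MeasurableSet s then Classical.choose (sierpinski hμ h (ENNReal.half_le_self)) else ∅

variable (μ : Measure Ω) (hμ : Atomless μ) [IsProbabilityMeasure μ]

lemma halfSet_spec {s : Set Ω} (hs : MeasurableSet s) :
    MeasurableSet (halfSet μ hμ s) ∧ halfSet μ hμ s ⊆ s ∧ μ (halfSet μ hμ s) = μ s / 2 := by
  rw [halfSet, dif_pos hs]
  exact Classical.choose_spec (sierpinski hμ hs (ENNReal.half_le_self))

end UnifConstruction

/-- Dyadic filtration: `dyad n k` has measure `k / 2^n` (for `k ≤ 2^n`). -/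
def dyad (μ : Measure Ω) (hμ : Atomless μ) [IsProbabilityMeasure μ] : ℕ → ℕ → Set Ω
  | 0, k => if k = 0 then (∅ : Set Ω) else Set.univ
  | (n+1), m =>
      if m % 2 = 0 then dyad μ hμ n (m / 2)
      else dyad μ hμ n (m / 2) ∪ halfSet μ hμ (dyad μ hμ n (m / 2 + 1) \ dyad μ hμ n (m / 2))

section UnifConstruction

variable (μ : Measure Ω) (hμ : Atomless μ) [IsProbabilityMeasure μ]

lemma dyad_double (n k : ℕ) : dyad μ hμ (n + 1) (2 * k) = dyad μ hμ n k := by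
  have h1 : (2 * k) % 2 = 0 := by omega
  have h2 : (2 * k) / 2 = k := by omega
  simp only [dyad, if_pos h1, h2]

lemma dyad_odd (n j : ℕ) : dyad μ hμ (n + 1) (2 * j + 1) =
    dyad μ hμ n j ∪ halfSet μ hμ (dyad μ hμ n (j + 1) \ dyad μ hμ n j) := by
  have h1 : ¬((2 * j + 1) % 2 = 0) := by omega
  have h2 : (2 * j + 1) / 2 = j := by omega
  simp only [dyad, if_neg h1, h2]

lemma dyad_meas : ∀ n k, MeasurableSet (dyad μ hμ n k) := by
  intro n
  induction n with
  | zero =>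
    intro k
    by_cases h : k = 0 <;> simp [dyad, h]
  | succ n ih =>
    intro m
    rcases Nat.even_or_odd m with ⟨j, rfl⟩ | ⟨j, rfl⟩
    · have : j + j = 2 * j := by ring
      rw [this, dyad_double]; exact ih j
    · rw [dyad_odd]
      exact (ih j).union (halfSet_spec μ hμ ((ih (j+1)).diff (ih j))).1

lemma dyad_succ_le : ∀ n k, dyad μ hμ n k ⊆ dyad μ hμ n (k + 1) := by
  intro n
  induction n with
  | zero =>
    intro k
    by_cases h : k = 0 <;> simp [dyad, h]
  | succ n ih =>
    intro m
    rcases Nat.even_or_odd m with ⟨j, rfl⟩ | ⟨j, rfl⟩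
    · have h1 : j + j = 2 * j := by ring
      rw [h1, dyad_double]
      have h2 : 2 * j + 1 = 2 * j + 1 := rfl
      rw [dyad_odd]
      exact subset_union_left
    · have h1 : 2 * j + 1 + 1 = 2 * (j + 1) := by ring
      rw [dyad_odd, h1, dyad_double]
      refine union_subset (ih j) ?_
      exact (halfSet_spec μ hμ ((dyad_meas μ hμ n (j+1)).diff (dyad_meas μ hμ n j))).2.1.trans
        diff_subset

lemma dyad_mono (n : ℕ) : Monotone (dyad μ hμ n) :=
  monotone_nat_of_le_succ (fun k => dyad_succ_le μ hμ n k)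

lemma dyad_univ : ∀ n k, 2 ^ n ≤ k → dyad μ hμ n k = univ := by
  intro n
  induction n with
  | zero =>
    intro k hk
    have : k ≠ 0 := by omega
    simp [dyad, this]
  | succ n ih =>
    intro m hm
    rcases Nat.even_or_odd m with ⟨j, rfl⟩ | ⟨j, rfl⟩
    · have h1 : j + j = 2 * j := by ring
      have h2 : 2 ^ n ≤ j := by rw [h1, pow_succ] at hm; omega
      rw [h1, dyad_double]; exact ih j h2
    · have h2 : 2 ^ n ≤ j := by rw [pow_succ] at hm; omega
      rw [dyad_odd, ih j h2]
      apply univ_union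

lemma dyad_measure : ∀ n k, k ≤ 2 ^ n → μ (dyad μ hμ n k) = ENNReal.ofReal ((k : ℝ) / 2 ^ n) := by
  intro n
  induction n with
  | zero =>
    intro k hk
    interval_cases k
    · simp [dyad]
    · simp [dyad]
  | succ n ih =>
    intro m hm
    rcases Nat.even_or_odd m with ⟨j, rfl⟩ | ⟨j, rfl⟩
    · have h1 : j + j = 2 * j := by ring
      have h2 : j ≤ 2 ^ n := by rw [h1, pow_succ] at hm; omega
      rw [h1, dyad_double, ih j h2]
      congr 1
      push_cast
      rw [pow_succ]
      field_simp
    · have h2 : j + 1 ≤ 2 ^ n := by rw [pow_succ] at hm; omega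
      have hdj := dyad_meas μ hμ n j
      have hdj1 := dyad_meas μ hμ n (j + 1)
      have hsub := dyad_succ_le μ hμ n j
      have hdiffm : MeasurableSet (dyad μ hμ n (j+1) \ dyad μ hμ n j) := hdj1.diff hdj
      obtain ⟨hhm, hhsub, hhval⟩ := halfSet_spec μ hμ hdiffm
      -- measure of the difference
      have hdiff : μ (dyad μ hμ n (j+1) \ dyad μ hμ n j) = ENNReal.ofReal ((1:ℝ) / 2 ^ n) := by
        have hadd : μ (dyad μ hμ n j) + μ (dyad μ hμ n (j+1) \ dyad μ hμ n j)
            = μ (dyad μ hμ n (j+1)) := by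
          rw [← measure_union disjoint_sdiff_right hdiffm, union_diff_cancel hsub]
        rw [ih j (by omega)] at hadd
        rw [ih (j+1) h2] at hadd
        have hsplit : ENNReal.ofReal (((j:ℝ)+1) / 2 ^ n)
            = ENNReal.ofReal ((j:ℝ) / 2 ^ n) + ENNReal.ofReal ((1:ℝ) / 2 ^ n) := by
          rw [← ENNReal.ofReal_add (by positivity) (by positivity)]
          congr 1
          ring
        push_cast at hadd
        rw [hsplit] at hadd
        exact (ENNReal.add_right_inj ENNReal.ofReal_ne_top).mp hadd
      rw [dyad_odd]
      rw [measure_union (disjoint_sdiff_right.mono_right hhsub) hhm]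
      rw [ih j (by omega), hhval, hdiff]
      have h3 : ENNReal.ofReal ((1:ℝ)/2^n / 2) = ENNReal.ofReal ((1:ℝ)/2^n) / 2 := by
        rw [ENNReal.ofReal_div_of_pos (by norm_num : (0:ℝ) < 2)]
        norm_num
      rw [← h3, ← ENNReal.ofReal_add (by positivity) (by positivity)]
      congr 1
      push_cast
      rw [pow_succ]
      field_simp

lemma dyad_lift : ∀ (p n k : ℕ), dyad μ hμ (n + p) (k * 2 ^ p) = dyad μ hμ n k := by
  intro p
  induction p with
  | zero => intro n k; simp
  | succ p ih =>
    intro n k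
    have h1 : k * 2 ^ (p + 1) = 2 * (k * 2 ^ p) := by ring
    have h2 : n + (p + 1) = (n + p) + 1 := rfl
    rw [h1, h2, dyad_double, ih]

lemma dyad_subset {m j n k : ℕ} (h : j * 2 ^ n ≤ k * 2 ^ m) :
    dyad μ hμ m j ⊆ dyad μ hμ n k := by
  have e1 : dyad μ hμ m j = dyad μ hμ (m + n) (j * 2 ^ n) := (dyad_lift μ hμ n m j).symm
  have e2 : dyad μ hμ n k = dyad μ hμ (m + n) (k * 2 ^ m) := by
    rw [Nat.add_comm m n]; exact (dyad_lift μ hμ m n k).symm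
  rw [e1, e2]
  exact dyad_mono μ hμ (m + n) h

/-- The uniform random variable built from the dyadic filtration. -/
def unif (ω : Ω) : ℝ :=
  sInf {x : ℝ | ∃ n k : ℕ, x = (k : ℝ) / 2 ^ n ∧ ω ∈ dyad μ hμ n k}

lemma unif_one_mem (ω : Ω) : (1 : ℝ) ∈ {x : ℝ | ∃ n k : ℕ, x = (k : ℝ) / 2 ^ n ∧ ω ∈ dyad μ hμ n k} := by
  refine ⟨0, 1, by norm_num, ?_⟩
  have : dyad μ hμ 0 1 = univ := dyad_univ μ hμ 0 1 (by norm_num)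
  rw [this]; trivial

lemma unif_bddBelow (ω : Ω) :
    BddBelow {x : ℝ | ∃ n k : ℕ, x = (k : ℝ) / 2 ^ n ∧ ω ∈ dyad μ hμ n k} := by
  refine ⟨0, fun x hx => ?_⟩
  obtain ⟨n, k, rfl, -⟩ := hx
  positivity

lemma unif_nonneg (ω : Ω) : 0 ≤ unif μ hμ ω :=
  le_csInf ⟨1, unif_one_mem μ hμ ω⟩ (fun x hx => by obtain ⟨n, k, rfl, -⟩ := hx; positivity)

lemma unif_le_one (ω : Ω) : unif μ hμ ω ≤ 1 :=
  csInf_le (unif_bddBelow μ hμ ω) (unif_one_mem μ hμ ω)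

lemma unif_le_of_mem {ω : Ω} {n k : ℕ} (h : ω ∈ dyad μ hμ n k) :
    unif μ hμ ω ≤ (k : ℝ) / 2 ^ n :=
  csInf_le (unif_bddBelow μ hμ ω) ⟨n, k, rfl, h⟩

lemma le_unif_of_not_mem {ω : Ω} {n k : ℕ} (h : ω ∉ dyad μ hμ n k) :
    (k : ℝ) / 2 ^ n ≤ unif μ hμ ω := by
  refine le_csInf ⟨1, unif_one_mem μ hμ ω⟩ ?_
  rintro x ⟨m, j, rfl, hmem⟩
  by_contra hlt
  push_neg at hlt
  have hnat : j * 2 ^ n ≤ k * 2 ^ m := by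
    have h2 : (j : ℝ) * 2 ^ n < (k : ℝ) * 2 ^ m := by
      rw [div_lt_div_iff₀ (by positivity) (by positivity)] at hlt
      linarith
    have := h2.le
    exact_mod_cast (by push_cast; exact_mod_cast this : ((j * 2 ^ n : ℕ) : ℝ) ≤ ((k * 2 ^ m : ℕ) : ℝ))
  exact h (dyad_subset μ hμ hnat hmem)

lemma unif_lt_iff {ω : Ω} {t : ℝ} :
    unif μ hμ ω < t ↔ ∃ n k : ℕ, (k : ℝ) / 2 ^ n < t ∧ ω ∈ dyad μ hμ n k := by
  constructor
  · intro h
    obtain ⟨x, hx, hxt⟩ := exists_lt_of_csInf_lt ⟨1, unif_one_mem μ hμ ω⟩ h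
    obtain ⟨n, k, rfl, hmem⟩ := hx
    exact ⟨n, k, hxt, hmem⟩
  · rintro ⟨n, k, hkt, hmem⟩
    exact lt_of_le_of_lt (unif_le_of_mem μ hμ hmem) hkt

lemma measurable_unif : Measurable (unif μ hμ) := by
  apply measurable_of_Iio
  intro t
  have : unif μ hμ ⁻¹' Iio t = ⋃ (n : ℕ), ⋃ (k : ℕ), ⋃ (_ : (k : ℝ) / 2 ^ n < t), dyad μ hμ n k := by
    ext ω
    simp only [mem_preimage, mem_Iio, mem_iUnion, unif_lt_iff μ hμ]
    tauto
  rw [this]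
  exact MeasurableSet.iUnion fun n => MeasurableSet.iUnion fun k =>
    MeasurableSet.iUnion fun _ => dyad_meas μ hμ n k

lemma exists_dyadic_btwn {a b : ℝ} (hab : a < b) (hb : 0 < b) :
    ∃ n k : ℕ, a < (k : ℝ) / 2 ^ n ∧ (k : ℝ) / 2 ^ n < b := by
  obtain ⟨n, hn⟩ := exists_pow_lt_of_lt_one (sub_pos.mpr hab) (by norm_num : (1:ℝ)/2 < 1)
  rcases lt_or_ge a 0 with ha | ha
  · exact ⟨0, 0, by simpa using ha, by simpa using hb⟩
  · have h2n : (0:ℝ) < 2 ^ n := by positivity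
    refine ⟨n, ⌊a * 2 ^ n⌋₊ + 1, ?_, ?_⟩
    · rw [lt_div_iff₀ h2n]
      push_cast
      exact Nat.lt_floor_add_one (a * 2 ^ n)
    · rw [div_lt_iff₀ h2n]
      have h1 : (⌊a * 2 ^ n⌋₊ : ℝ) ≤ a * 2 ^ n := Nat.floor_le (by positivity)
      have h2 : ((1:ℝ)/2) ^ n = 1 / 2 ^ n := by
        rw [div_pow]; norm_num
      have h3 : (1:ℝ) < (b - a) * 2 ^ n := by
        rw [h2] at hn
        calc (1:ℝ) = (1 / 2 ^ n) * 2 ^ n := by field_simp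
          _ < (b - a) * 2 ^ n := by gcongr
      push_cast
      nlinarith

lemma meas_unif_le_dyad {n k : ℕ} (h : k ≤ 2 ^ n) :
    ENNReal.ofReal ((k : ℝ) / 2 ^ n) ≤ μ {ω | unif μ hμ ω ≤ (k : ℝ) / 2 ^ n} := by
  rw [← dyad_measure μ hμ n k h]
  exact measure_mono (fun ω hω => unif_le_of_mem μ hμ hω)

lemma meas_unif_lt_dyad {n k : ℕ} (h : k ≤ 2 ^ n) :
    μ {ω | unif μ hμ ω < (k : ℝ) / 2 ^ n} ≤ ENNReal.ofReal ((k : ℝ) / 2 ^ n) := by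
  rw [← dyad_measure μ hμ n k h]
  refine measure_mono (fun ω hω => ?_)
  by_contra hmem
  exact absurd (le_unif_of_not_mem μ hμ hmem) (not_le.mpr hω)

lemma measure_unif_le (t : ℝ) :
    μ {ω | unif μ hμ ω ≤ t} = ENNReal.ofReal (min t 1) := by
  rcases lt_or_ge t 0 with ht | ht
  · have he : {ω | unif μ hμ ω ≤ t} = ∅ := by
      ext ω
      simp only [mem_setOf_eq, mem_empty_iff_false, iff_false, not_le]
      exact lt_of_lt_of_le ht (unif_nonneg μ hμ ω)
    rw [he, measure_empty, ENNReal.ofReal_eq_zero.mpr]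
    exact le_of_lt (lt_of_le_of_lt (min_le_left _ _) ht)
  rcases le_or_gt 1 t with ht1 | ht1
  · have he : {ω | unif μ hμ ω ≤ t} = univ := by
      ext ω
      simp only [mem_setOf_eq, mem_univ, iff_true]
      exact (unif_le_one μ hμ ω).trans ht1
    rw [he, measure_univ, min_eq_right ht1]
    norm_num
  · rw [min_eq_left ht1.le]
    apply le_antisymm
    · apply ENNReal.le_of_forall_pos_le_add
      intro ε hε _
      have hab : t < min (t + ε) 1 := lt_min (by exact_mod_cast lt_add_of_pos_right t hε) ht1
      obtain ⟨n, k, hd1, hd2⟩ := exists_dyadic_btwn hab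
        (lt_of_le_of_lt ht hab)
      have hk : k ≤ 2 ^ n := by
        have h1 : (k : ℝ) / 2 ^ n < 1 := lt_of_lt_of_le hd2 (min_le_right _ _)
        rw [div_lt_one (by positivity)] at h1
        exact_mod_cast h1.le
      calc μ {ω | unif μ hμ ω ≤ t} ≤ μ {ω | unif μ hμ ω < (k : ℝ) / 2 ^ n} :=
            measure_mono (fun ω hω => lt_of_le_of_lt hω hd1)
        _ ≤ ENNReal.ofReal ((k : ℝ) / 2 ^ n) := meas_unif_lt_dyad μ hμ hk
        _ ≤ ENNReal.ofReal (t + ε) :=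
            ENNReal.ofReal_le_ofReal (le_of_lt (lt_of_lt_of_le hd2 (min_le_left _ _)))
        _ ≤ ENNReal.ofReal t + ENNReal.ofReal ε := ENNReal.ofReal_add_le
        _ = ENNReal.ofReal t + ε := by rw [ENNReal.ofReal_coe_nnreal]
    · rcases eq_or_lt_of_le ht with rfl | ht0
      · simp
      apply ENNReal.le_of_forall_pos_le_add
      intro ε hε _
      obtain ⟨n, k, hd1, hd2⟩ := exists_dyadic_btwn
        (show t - ε < t by exact_mod_cast sub_lt_self t hε) ht0
      have hk : k ≤ 2 ^ n := by
        have h1 : (k : ℝ) / 2 ^ n < 1 := lt_of_lt_of_le hd2 ht1.le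
        rw [div_lt_one (by positivity)] at h1
        exact_mod_cast h1.le
      calc ENNReal.ofReal t ≤ ENNReal.ofReal ((k : ℝ) / 2 ^ n + ε) :=
            ENNReal.ofReal_le_ofReal (by
              have : t - ε < (k : ℝ) / 2 ^ n := hd1
              linarith)
        _ ≤ ENNReal.ofReal ((k : ℝ) / 2 ^ n) + ENNReal.ofReal ε := ENNReal.ofReal_add_le
        _ = ENNReal.ofReal ((k : ℝ) / 2 ^ n) + ε := by rw [ENNReal.ofReal_coe_nnreal]
        _ ≤ μ {ω | unif μ hμ ω ≤ (k : ℝ) / 2 ^ n} + ε := by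
            gcongr
            exact meas_unif_le_dyad μ hμ hk
        _ ≤ μ {ω | unif μ hμ ω ≤ t} + ε :=
            add_le_add_left (measure_mono (fun ω hω => le_trans hω hd2.le)) ε

lemma map_unif : μ.map (unif μ hμ) = volume.restrict (Ioc (0:ℝ) 1) := by
  refine Measure.ext_of_Iic _ _ (fun t => ?_)
  rw [Measure.map_apply (measurable_unif μ hμ) measurableSet_Iic]
  have h1 : unif μ hμ ⁻¹' Iic t = {ω | unif μ hμ ω ≤ t} := rfl
  rw [h1, measure_unif_le, Measure.restrict_apply measurableSet_Iic]
  have h2 : Iic t ∩ Ioc (0:ℝ) 1 = Ioc 0 (min 1 t) := by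
    rw [inter_comm, Set.Ioc_inter_Iic]
  rw [h2, Real.volume_Ioc, min_comm]
  norm_num

lemma unif_preimage {A : Set ℝ} (hA : MeasurableSet A) :
    μ (unif μ hμ ⁻¹' A) = volume (A ∩ Ioc (0:ℝ) 1) := by
  rw [← Measure.map_apply (measurable_unif μ hμ) hA, map_unif, Measure.restrict_apply hA]

end UnifConstruction

/-- doubling map coordinate: `frac2 u = 2u` on `[0,1/2]`, `2u-1` on `(1/2,1]`. -/
def frac2 (u : ℝ) : ℝ := if u ≤ 1/2 then 2*u else 2*u - 1

/-- The Y-coupling function: `Y = 2 / frac2 u`. -/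
def phiY (u : ℝ) : ℝ := 2 / frac2 u

def w1 (q u : ℝ) : ℝ :=
  if q < frac2 u then frac2 u else (if u ≤ 1/2 then frac2 u / 2 else q - frac2 u / 2)

def phiX1 (q u : ℝ) : ℝ := 1 / w1 q u

def w2 (q u : ℝ) : ℝ :=
  if frac2 u ≤ q then frac2 u
  else (if frac2 u ≤ 2*q then 1 + q - frac2 u else (if u ≤ 1/2 then frac2 u / 2 else 1 - frac2 u / 2))

def phiX2 (q u : ℝ) : ℝ := 1 / w2 q u

lemma measurable_frac2 : Measurable frac2 := by
  unfold frac2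
  exact Measurable.ite (measurableSet_le measurable_id measurable_const)
    (measurable_const.mul measurable_id)
    ((measurable_const.mul measurable_id).sub measurable_const)

lemma measurable_phiY : Measurable phiY :=
  measurable_const.div measurable_frac2

lemma measurable_w1 (q : ℝ) : Measurable (w1 q) := by
  unfold w1
  refine Measurable.ite (measurableSet_lt measurable_const measurable_frac2) measurable_frac2 ?_
  exact Measurable.ite (measurableSet_le measurable_id measurable_const)
    (measurable_frac2.div measurable_const)
    (measurable_const.sub (measurable_frac2.div measurable_const))

lemma measurable_phiX1 (q : ℝ) : Measurable (phiX1 q) :=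
  measurable_const.div (measurable_w1 q)

lemma measurable_w2 (q : ℝ) : Measurable (w2 q) := by
  unfold w2
  refine Measurable.ite (measurableSet_le measurable_frac2 measurable_const) measurable_frac2 ?_
  refine Measurable.ite (measurableSet_le measurable_frac2 measurable_const)
    (measurable_const.sub measurable_frac2) ?_
  exact Measurable.ite (measurableSet_le measurable_id measurable_const)
    (measurable_frac2.div measurable_const)
    (measurable_const.sub (measurable_frac2.div measurable_const))

lemma measurable_phiX2 (q : ℝ) : Measurable (phiX2 q) :=
  measurable_const.div (measurable_w2 q)

lemma frac2_low {u : ℝ} (hu : u ≤ 1/2) : frac2 u = 2*u := if_pos hu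

lemma frac2_high {u : ℝ} (hu : ¬ u ≤ 1/2) : frac2 u = 2*u - 1 := if_neg hu

lemma frac2_mem {u : ℝ} (hu : u ∈ Ioc (0:ℝ) 1) : frac2 u ∈ Ioc (0:ℝ) 1 := by
  obtain ⟨h0, h1⟩ := hu
  by_cases h : u ≤ 1/2
  · rw [frac2_low h]; constructor <;> linarith
  · rw [frac2_high h]; push_neg at h; constructor <;> linarith

lemma w1_low {q u : ℝ} (hu : u ≤ 1/2) : w1 q u = if q < 2*u then 2*u else u := by
  simp only [w1, frac2_low hu, if_pos hu]
  congr 1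
  ring

lemma w1_high {q u : ℝ} (hu : ¬ u ≤ 1/2) :
    w1 q u = if q < 2*u - 1 then 2*u - 1 else q + 1/2 - u := by
  simp only [w1, frac2_high hu, if_neg hu]
  congr 1
  ring

lemma w2_low {q u : ℝ} (hu : u ≤ 1/2) :
    w2 q u = if 2*u ≤ q then 2*u else if 2*u ≤ 2*q then 1 + q - 2*u else u := by
  simp only [w2, frac2_low hu, if_pos hu]
  congr 1
  ring

lemma w2_high {q u : ℝ} (hu : ¬ u ≤ 1/2) :
    w2 q u = if 2*u - 1 ≤ q then 2*u - 1
      else if 2*u - 1 ≤ 2*q then q + 2 - 2*u else 3/2 - u := by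
  simp only [w2, frac2_high hu, if_neg hu]
  have e1 : 1 + q - (2*u - 1) = q + 2 - 2*u := by ring
  have e2 : 1 - (2*u - 1)/2 = 3/2 - u := by ring
  rw [e1, e2]

/-- Generic: if `W` is "uniform" on `(0,1]` (in the survival-set sense), then `c / W`
has the Pareto(c) distribution. -/
lemma vol_pareto {W : ℝ → ℝ} {c : ℝ} (hc : 0 < c)
    (hpos : ∀ u ∈ Ioc (0:ℝ) 1, 0 < W u) (hle1 : ∀ u ∈ Ioc (0:ℝ) 1, W u ≤ 1)
    (hunif : ∀ s : ℝ, 0 < s → s ≤ 1 →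
      volume ({u | s ≤ W u} ∩ Ioc 0 1) = ENNReal.ofReal (1 - s)) (x : ℝ) :
    volume ({u | c / W u ≤ x} ∩ Ioc 0 1)
      = ENNReal.ofReal (if c ≤ x then 1 - c / x else 0) := by
  rcases le_or_gt c x with hx | hx
  · rw [if_pos hx]
    have hx0 : 0 < x := lt_of_lt_of_le hc hx
    have hset : {u : ℝ | c / W u ≤ x} ∩ Ioc 0 1 = {u | c / x ≤ W u} ∩ Ioc 0 1 := by
      ext u
      simp only [mem_inter_iff, mem_setOf_eq, and_congr_left_iff]
      intro hu
      have hW := hpos u hu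
      rw [div_le_iff₀ hW, div_le_iff₀ hx0]
      constructor <;> intro h <;> nlinarith
    rw [hset, hunif (c/x) (by positivity) (by rw [div_le_one hx0]; exact hx)]
  · rw [if_neg (not_le.mpr hx)]
    have hset : {u : ℝ | c / W u ≤ x} ∩ Ioc 0 1 = ∅ := by
      ext u
      simp only [mem_inter_iff, mem_setOf_eq, mem_empty_iff_false, iff_false, not_and]
      intro h hu
      have hW := hpos u hu
      have hW1 := hle1 u hu
      have : c ≤ c / W u := by
        rw [le_div_iff₀ hW]
        nlinarith
      linarith
    rw [hset]
    simp

/-- survival sets of `frac2` : uniformity. -/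
lemma frac2_surv {s : ℝ} (h0 : 0 < s) (h1 : s ≤ 1) :
    {u | s ≤ frac2 u} ∩ Ioc 0 1 = Icc (s/2) (1/2) ∪ Icc ((1+s)/2) 1 := by
  ext u
  simp only [mem_inter_iff, mem_setOf_eq, mem_Ioc, mem_union, mem_Icc]
  constructor
  · rintro ⟨hw, hu0, hu1⟩
    by_cases hu : u ≤ 1/2
    · rw [frac2_low hu] at hw
      left; constructor <;> linarith
    · rw [frac2_high hu] at hw; push_neg at hu
      right; constructor <;> linarith
  · rintro (⟨ha, hb⟩ | ⟨ha, hb⟩)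
    · have hu : u ≤ 1/2 := hb
      rw [frac2_low hu]
      refine ⟨by linarith, by linarith, by linarith⟩
    · have hu : ¬ u ≤ 1/2 := by push_neg; linarith
      rw [frac2_high hu]; push_neg at hu
      refine ⟨by linarith, by linarith, by linarith⟩

lemma vol_frac2_surv {s : ℝ} (h0 : 0 < s) (h1 : s ≤ 1) :
    volume ({u | s ≤ frac2 u} ∩ Ioc 0 1) = ENNReal.ofReal (1 - s) := by
  rw [frac2_surv h0 h1]
  rw [measure_union ?_ measurableSet_Icc]
  · rw [Real.volume_Icc, Real.volume_Icc,
      ← ENNReal.ofReal_add (by linarith) (by linarith)]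
    congr 1
    ring
  · rw [disjoint_left]
    rintro a ⟨_, h2⟩ ⟨h3, _⟩
    linarith

lemma w1_pos {q u : ℝ} (hq0 : 0 < q) (hu : u ∈ Ioc (0:ℝ) 1) : 0 < w1 q u := by
  obtain ⟨hu0, hu1⟩ := hu
  by_cases h : u ≤ 1/2
  · rw [w1_low h]
    by_cases hql : q < 2*u
    · rw [if_pos hql]; linarith
    · rw [if_neg hql]; linarith
  · rw [w1_high h]; push_neg at h
    by_cases hql : q < 2*u - 1
    · rw [if_pos hql]; linarith
    · rw [if_neg hql]; push_neg at hql; linarith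

lemma w1_le_one {q u : ℝ} (hq1 : q < 1) (hu : u ∈ Ioc (0:ℝ) 1) : w1 q u ≤ 1 := by
  obtain ⟨hu0, hu1⟩ := hu
  by_cases h : u ≤ 1/2
  · rw [w1_low h]
    by_cases hql : q < 2*u
    · rw [if_pos hql]; linarith
    · rw [if_neg hql]; linarith
  · rw [w1_high h]; push_neg at h
    by_cases hql : q < 2*u - 1
    · rw [if_pos hql]; linarith
    · rw [if_neg hql]; linarith

lemma w1_surv {q s : ℝ} (hq0 : 0 < q) (hq1 : q < 1) (h0 : 0 < s) (h1 : s ≤ 1) :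
    volume ({u | s ≤ w1 q u} ∩ Ioc 0 1) = ENNReal.ofReal (1 - s) := by
  rcases le_or_gt s (q/2) with hA | hA
  · -- s ≤ q/2
    have hset : {u | s ≤ w1 q u} ∩ Ioc 0 1 = Icc s (q/2) ∪ Ioc (q/2) 1 := by
      ext u
      simp only [mem_inter_iff, mem_setOf_eq, mem_Ioc, mem_union, mem_Icc]
      constructor
      · rintro ⟨hw, hu0, hu1⟩
        by_cases hu : u ≤ 1/2
        · rw [w1_low hu] at hw
          by_cases hql : q < 2*u
          · right; exact ⟨by linarith, hu1⟩
          · rw [if_neg hql] at hw; push_neg at hql; left; exact ⟨hw, by linarith⟩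
        · push_neg at hu; right; exact ⟨by linarith, hu1⟩
      · rintro (⟨ha, hb⟩ | ⟨ha, hb⟩)
        · have hu : u ≤ 1/2 := by linarith
          rw [w1_low hu, if_neg (not_lt.mpr (by linarith))]
          exact ⟨ha, by linarith, by linarith⟩
        · refine ⟨?_, by linarith, hb⟩
          by_cases hu : u ≤ 1/2
          · rw [w1_low hu, if_pos (by linarith)]; linarith
          · rw [w1_high hu]; push_neg at hu
            by_cases hql : q < 2*u - 1
            · rw [if_pos hql]; linarith
            · rw [if_neg hql]; push_neg at hql; linarith
    rw [hset, measure_union ?_ measurableSet_Ioc, Real.volume_Icc, Real.volume_Ioc,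
      ← ENNReal.ofReal_add (by linarith) (by linarith)]
    · congr 1; ring
    · rw [disjoint_left]; rintro a ⟨_, h2⟩ ⟨h3, _⟩; linarith
  rcases le_or_gt s q with hB | hB
  · -- q/2 < s ≤ q
    have hset : {u | s ≤ w1 q u} ∩ Ioc 0 1
        = Ioc (q/2) (q + 1/2 - s) ∪ Ioc ((1+q)/2) 1 := by
      ext u
      simp only [mem_inter_iff, mem_setOf_eq, mem_Ioc, mem_union]
      constructor
      · rintro ⟨hw, hu0, hu1⟩
        by_cases hu : u ≤ 1/2
        · rw [w1_low hu] at hw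
          by_cases hql : q < 2*u
          · left; exact ⟨by linarith, by linarith⟩
          · rw [if_neg hql] at hw; push_neg at hql; exfalso; linarith
        · rw [w1_high hu] at hw; push_neg at hu
          by_cases hql : q < 2*u - 1
          · right; exact ⟨by linarith, hu1⟩
          · rw [if_neg hql] at hw; push_neg at hql; left
            exact ⟨by linarith, by linarith⟩
      · rintro (⟨ha, hb⟩ | ⟨ha, hb⟩)
        · refine ⟨?_, by linarith, by linarith⟩
          by_cases hu : u ≤ 1/2
          · rw [w1_low hu, if_pos (by linarith)]; linarith
          · rw [w1_high hu, if_neg (not_lt.mpr (by linarith))]; linarith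
        · have hu : ¬ u ≤ 1/2 := by push_neg; linarith
          rw [w1_high hu, if_pos (by linarith)]
          exact ⟨by linarith, by linarith, hb⟩
    rw [hset, measure_union ?_ measurableSet_Ioc, Real.volume_Ioc, Real.volume_Ioc,
      ← ENNReal.ofReal_add (by linarith) (by linarith)]
    · congr 1; ring
    · rw [disjoint_left]; rintro a ⟨_, h2⟩ ⟨h3, _⟩; linarith
  · -- q < s
    have hset : {u | s ≤ w1 q u} ∩ Ioc 0 1 = Icc (s/2) (1/2) ∪ Icc ((1+s)/2) 1 := by
      ext u
      simp only [mem_inter_iff, mem_setOf_eq, mem_Ioc, mem_union, mem_Icc]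
      constructor
      · rintro ⟨hw, hu0, hu1⟩
        by_cases hu : u ≤ 1/2
        · rw [w1_low hu] at hw
          by_cases hql : q < 2*u
          · rw [if_pos hql] at hw; left; exact ⟨by linarith, hu⟩
          · rw [if_neg hql] at hw; push_neg at hql; exfalso; linarith
        · rw [w1_high hu] at hw; push_neg at hu
          by_cases hql : q < 2*u - 1
          · rw [if_pos hql] at hw; right; exact ⟨by linarith, hu1⟩
          · rw [if_neg hql] at hw; exfalso; linarith
      · rintro (⟨ha, hb⟩ | ⟨ha, hb⟩)
        · rw [w1_low hb, if_pos (by linarith)]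
          exact ⟨by linarith, by linarith, by linarith⟩
        · have hu : ¬ u ≤ 1/2 := by push_neg; linarith
          rw [w1_high hu, if_pos (by linarith)]
          exact ⟨by linarith, by linarith, hb⟩
    rw [hset, measure_union ?_ measurableSet_Icc, Real.volume_Icc, Real.volume_Icc,
      ← ENNReal.ofReal_add (by linarith) (by linarith)]
    · congr 1; ring
    · rw [disjoint_left]; rintro a ⟨_, h2⟩ ⟨h3, _⟩; linarith

lemma w2_pos {q u : ℝ} (hq0 : 0 < q) (hq1 : q < 1) (hu : u ∈ Ioc (0:ℝ) 1) : 0 < w2 q u := by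
  obtain ⟨hu0, hu1⟩ := hu
  by_cases h : u ≤ 1/2
  · rw [w2_low h]
    by_cases h1 : 2*u ≤ q
    · rw [if_pos h1]; linarith
    · rw [if_neg h1]
      by_cases h2 : 2*u ≤ 2*q
      · rw [if_pos h2]; linarith
      · rw [if_neg h2]; linarith
  · rw [w2_high h]; push_neg at h
    by_cases h1 : 2*u - 1 ≤ q
    · rw [if_pos h1]; linarith
    · rw [if_neg h1]
      by_cases h2 : 2*u - 1 ≤ 2*q
      · rw [if_pos h2]; linarith
      · rw [if_neg h2]; linarith

lemma w2_le_one {q u : ℝ} (hq0 : 0 < q) (hq1 : q < 1) (hu : u ∈ Ioc (0:ℝ) 1) : w2 q u ≤ 1 := by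
  obtain ⟨hu0, hu1⟩ := hu
  by_cases h : u ≤ 1/2
  · rw [w2_low h]
    by_cases h1 : 2*u ≤ q
    · rw [if_pos h1]; linarith
    · rw [if_neg h1]; push_neg at h1
      by_cases h2 : 2*u ≤ 2*q
      · rw [if_pos h2]; linarith
      · rw [if_neg h2]; linarith
  · rw [w2_high h]; push_neg at h
    by_cases h1 : 2*u - 1 ≤ q
    · rw [if_pos h1]; linarith
    · rw [if_neg h1]; push_neg at h1
      by_cases h2 : 2*u - 1 ≤ 2*q
      · rw [if_pos h2]; linarith
      · rw [if_neg h2]; linarith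

lemma w2_surv {q s : ℝ} (hq0 : 0 < q) (hq1 : q < 1) (h0 : 0 < s) (h1 : s ≤ 1) :
    volume ({u | s ≤ w2 q u} ∩ Ioc 0 1) = ENNReal.ofReal (1 - s) := by
  rcases le_or_gt s q with hA | hA
  · -- s ≤ q : set = Icc (s/2) (1/2) ∪ Icc ((1+s)/2) 1
    have hset : {u | s ≤ w2 q u} ∩ Ioc 0 1 = Icc (s/2) (1/2) ∪ Icc ((1+s)/2) 1 := by
      ext u
      simp only [mem_inter_iff, mem_setOf_eq, mem_Ioc, mem_union, mem_Icc]
      constructor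
      · rintro ⟨hw, hu0, hu1⟩
        by_cases hu : u ≤ 1/2
        · rw [w2_low hu] at hw
          left
          refine ⟨?_, hu⟩
          by_cases hb1 : 2*u ≤ q
          · rw [if_pos hb1] at hw; linarith
          · push_neg at hb1; linarith
        · rw [w2_high hu] at hw; push_neg at hu
          right
          refine ⟨?_, hu1⟩
          by_cases hb1 : 2*u - 1 ≤ q
          · rw [if_pos hb1] at hw; linarith
          · push_neg at hb1; linarith
      · rintro (⟨ha, hb⟩ | ⟨ha, hb⟩)
        · rw [w2_low hb]
          refine ⟨?_, by linarith, by linarith⟩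
          by_cases hb1 : 2*u ≤ q
          · rw [if_pos hb1]; linarith
          · rw [if_neg hb1]; push_neg at hb1
            by_cases hb2 : 2*u ≤ 2*q
            · rw [if_pos hb2]; linarith
            · rw [if_neg hb2]; push_neg at hb2; linarith
        · have hu : ¬ u ≤ 1/2 := by push_neg; linarith
          rw [w2_high hu]; push_neg at hu
          refine ⟨?_, by linarith, hb⟩
          by_cases hb1 : 2*u - 1 ≤ q
          · rw [if_pos hb1]; linarith
          · rw [if_neg hb1]; push_neg at hb1
            by_cases hb2 : 2*u - 1 ≤ 2*q
            · rw [if_pos hb2]; linarith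
            · rw [if_neg hb2]; push_neg at hb2; linarith
    rw [hset, measure_union ?_ measurableSet_Icc, Real.volume_Icc, Real.volume_Icc,
      ← ENNReal.ofReal_add (by linarith) (by linarith)]
    · congr 1; ring
    · rw [disjoint_left]; rintro a ⟨_, h2⟩ ⟨h3, _⟩; linarith
  rcases le_or_gt s (1/2) with hB | hB
  · -- q < s ≤ 1/2 : set = Ioc (q/2) q ∪ Icc s (1/2) ∪ Ioc ((1+q)/2) 1
    have hq12 : q < 1/2 := by linarith
    have hset : {u | s ≤ w2 q u} ∩ Ioc 0 1
        = (Ioc (q/2) q ∪ Icc s (1/2)) ∪ Ioc ((1+q)/2) 1 := by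
      ext u
      simp only [mem_inter_iff, mem_setOf_eq, mem_Ioc, mem_union, mem_Icc]
      constructor
      · rintro ⟨hw, hu0, hu1⟩
        by_cases hu : u ≤ 1/2
        · rw [w2_low hu] at hw
          by_cases hb1 : 2*u ≤ q
          · rw [if_pos hb1] at hw; exfalso; linarith
          · rw [if_neg hb1] at hw; push_neg at hb1
            by_cases hb2 : 2*u ≤ 2*q
            · left; left; exact ⟨by linarith, by linarith⟩
            · rw [if_neg hb2] at hw; push_neg at hb2
              left; right; exact ⟨hw, hu⟩
        · rw [w2_high hu] at hw; push_neg at hu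
          by_cases hb1 : 2*u - 1 ≤ q
          · rw [if_pos hb1] at hw; exfalso; linarith
          · right; push_neg at hb1; exact ⟨by linarith, hu1⟩
      · rintro ((⟨ha, hb⟩ | ⟨ha, hb⟩) | ⟨ha, hb⟩)
        · have hu : u ≤ 1/2 := by linarith
          rw [w2_low hu, if_neg (not_le.mpr (by linarith)), if_pos (by linarith)]
          exact ⟨by linarith, by linarith, by linarith⟩
        · have hu : u ≤ 1/2 := hb
          rw [w2_low hu, if_neg (not_le.mpr (by linarith)),
            if_neg (not_le.mpr (by linarith))]
          exact ⟨ha, by linarith, by linarith⟩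
        · have hu : ¬ u ≤ 1/2 := by push_neg; linarith
          rw [w2_high hu]; push_neg at hu
          refine ⟨?_, by linarith, hb⟩
          rw [if_neg (not_le.mpr (by linarith))]
          by_cases hb2 : 2*u - 1 ≤ 2*q
          · rw [if_pos hb2]; linarith
          · rw [if_neg hb2]; linarith
    rw [hset, measure_union ?_ measurableSet_Ioc,
      measure_union ?_ measurableSet_Icc, Real.volume_Ioc, Real.volume_Icc, Real.volume_Ioc,
      ← ENNReal.ofReal_add (by linarith) (by linarith),
      ← ENNReal.ofReal_add (by linarith) (by linarith)]
    · congr 1; ring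
    · rw [disjoint_left]; rintro a ⟨_, h2⟩ ⟨h3, _⟩; linarith
    · rw [disjoint_left]
      rintro a (⟨_, h2⟩ | ⟨_, h2⟩) ⟨h3, _⟩ <;> linarith
  rcases le_or_gt s (1-q) with hC | hC
  · -- 1/2 < s ≤ 1-q : set = Ioc (q/2) q ∪ Ioc ((1+q)/2) (3/2 - s)
    have hq12 : q < 1/2 := by linarith
    have hset : {u | s ≤ w2 q u} ∩ Ioc 0 1
        = Ioc (q/2) q ∪ Ioc ((1+q)/2) (3/2 - s) := by
      ext u
      simp only [mem_inter_iff, mem_setOf_eq, mem_Ioc, mem_union]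
      constructor
      · rintro ⟨hw, hu0, hu1⟩
        by_cases hu : u ≤ 1/2
        · rw [w2_low hu] at hw
          by_cases hb1 : 2*u ≤ q
          · rw [if_pos hb1] at hw; exfalso; linarith
          · rw [if_neg hb1] at hw; push_neg at hb1
            by_cases hb2 : 2*u ≤ 2*q
            · left; exact ⟨by linarith, by linarith⟩
            · rw [if_neg hb2] at hw; push_neg at hb2; exfalso; linarith
        · rw [w2_high hu] at hw; push_neg at hu
          by_cases hb1 : 2*u - 1 ≤ q
          · rw [if_pos hb1] at hw; exfalso; linarith
          · rw [if_neg hb1] at hw; push_neg at hb1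
            by_cases hb2 : 2*u - 1 ≤ 2*q
            · rw [if_pos hb2] at hw; right; exact ⟨by linarith, by linarith⟩
            · rw [if_neg hb2] at hw; right; exact ⟨by linarith, by linarith⟩
      · rintro (⟨ha, hb⟩ | ⟨ha, hb⟩)
        · have hu : u ≤ 1/2 := by linarith
          rw [w2_low hu, if_neg (not_le.mpr (by linarith)), if_pos (by linarith)]
          exact ⟨by linarith, by linarith, by linarith⟩
        · have hu : ¬ u ≤ 1/2 := by push_neg; linarith
          rw [w2_high hu]; push_neg at hu
          refine ⟨?_, by linarith, by linarith⟩
          rw [if_neg (not_le.mpr (by linarith))]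
          by_cases hb2 : 2*u - 1 ≤ 2*q
          · rw [if_pos hb2]; linarith
          · rw [if_neg hb2]; linarith
    rw [hset, measure_union ?_ measurableSet_Ioc, Real.volume_Ioc, Real.volume_Ioc,
      ← ENNReal.ofReal_add (by linarith) (by linarith)]
    · congr 1; ring
    · rw [disjoint_left]; rintro a ⟨_, h2⟩ ⟨h3, _⟩; linarith
  · -- s > q, s > 1/2, s > 1-q
    have hset : {u | s ≤ w2 q u} ∩ Ioc 0 1
        = Ioc (q/2) ((1+q-s)/2) ∪ Ioc ((1+q)/2) ((2+q-s)/2) := by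
      ext u
      simp only [mem_inter_iff, mem_setOf_eq, mem_Ioc, mem_union]
      constructor
      · rintro ⟨hw, hu0, hu1⟩
        by_cases hu : u ≤ 1/2
        · rw [w2_low hu] at hw
          by_cases hb1 : 2*u ≤ q
          · rw [if_pos hb1] at hw; exfalso; linarith
          · rw [if_neg hb1] at hw; push_neg at hb1
            by_cases hb2 : 2*u ≤ 2*q
            · rw [if_pos hb2] at hw; left; exact ⟨by linarith, by linarith⟩
            · rw [if_neg hb2] at hw; push_neg at hb2; exfalso; linarith
        · rw [w2_high hu] at hw; push_neg at hu
          by_cases hb1 : 2*u - 1 ≤ q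
          · rw [if_pos hb1] at hw; exfalso; linarith
          · rw [if_neg hb1] at hw; push_neg at hb1
            by_cases hb2 : 2*u - 1 ≤ 2*q
            · rw [if_pos hb2] at hw; right; exact ⟨by linarith, by linarith⟩
            · rw [if_neg hb2] at hw; push_neg at hb2; exfalso; linarith
      · rintro (⟨ha, hb⟩ | ⟨ha, hb⟩)
        · have hu : u ≤ 1/2 := by linarith
          rw [w2_low hu, if_neg (not_le.mpr (by linarith)), if_pos (by linarith)]
          exact ⟨by linarith, by linarith, by linarith⟩
        · have hu : ¬ u ≤ 1/2 := by push_neg; linarith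
          rw [w2_high hu]; push_neg at hu
          refine ⟨?_, by linarith, by linarith⟩
          rw [if_neg (not_le.mpr (by linarith)), if_pos (by linarith)]
          linarith
    rw [hset, measure_union ?_ measurableSet_Ioc, Real.volume_Ioc, Real.volume_Ioc,
      ← ENNReal.ofReal_add (by linarith) (by linarith)]
    · congr 1; ring
    · rw [disjoint_left]; rintro a ⟨_, h2⟩ ⟨h3, _⟩; linarith

lemma vol_event1 {q : ℝ} (hq0 : 0 < q) (hq1 : q < 1) :
    volume ({u | frac2 u ≤ q} ∩ Ioc 0 1) = ENNReal.ofReal q := by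
  have hset : {u | frac2 u ≤ q} ∩ Ioc 0 1 = Ioc 0 (q/2) ∪ Ioc (1/2) ((1+q)/2) := by
    ext u
    simp only [mem_inter_iff, mem_setOf_eq, mem_Ioc, mem_union]
    constructor
    · rintro ⟨hw, hu0, hu1⟩
      by_cases hu : u ≤ 1/2
      · rw [frac2_low hu] at hw; left; exact ⟨hu0, by linarith⟩
      · rw [frac2_high hu] at hw; push_neg at hu; right; exact ⟨hu, by linarith⟩
    · rintro (⟨ha, hb⟩ | ⟨ha, hb⟩)
      · rw [frac2_low (by linarith)]
        exact ⟨by linarith, ha, by linarith⟩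
      · rw [frac2_high (by push_neg; linarith)]
        exact ⟨by linarith, by linarith, by linarith⟩
  rw [hset, measure_union ?_ measurableSet_Ioc, Real.volume_Ioc, Real.volume_Ioc,
    ← ENNReal.ofReal_add (by linarith) (by linarith)]
  · congr 1; ring
  · rw [disjoint_left]; rintro a ⟨_, h2⟩ ⟨h3, _⟩; linarith

lemma vol_event2 {q : ℝ} (hq0 : 0 < q) (hq1 : q < 1) :
    volume ({u | q < frac2 u} ∩ Ioc 0 1) = ENNReal.ofReal (1 - q) := by
  have hset : {u | q < frac2 u} ∩ Ioc 0 1 = Ioc (q/2) (1/2) ∪ Ioc ((1+q)/2) 1 := by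
    ext u
    simp only [mem_inter_iff, mem_setOf_eq, mem_Ioc, mem_union]
    constructor
    · rintro ⟨hw, hu0, hu1⟩
      by_cases hu : u ≤ 1/2
      · rw [frac2_low hu] at hw; left; exact ⟨by linarith, hu⟩
      · rw [frac2_high hu] at hw; push_neg at hu; right; exact ⟨by linarith, hu1⟩
    · rintro (⟨ha, hb⟩ | ⟨ha, hb⟩)
      · rw [frac2_low hb]
        exact ⟨by linarith, by linarith, by linarith⟩
      · rw [frac2_high (by push_neg; linarith)]
        exact ⟨by linarith, by linarith, by linarith⟩
  rw [hset, measure_union ?_ measurableSet_Ioc, Real.volume_Ioc, Real.volume_Ioc,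
    ← ENNReal.ofReal_add (by linarith) (by linarith)]
  · congr 1; ring
  · rw [disjoint_left]; rintro a ⟨_, h2⟩ ⟨h3, _⟩; linarith

lemma coupling1_le {q u : ℝ} (hq0 : 0 < q) (hq1 : q < 1) (hu : u ∈ Ioc (0:ℝ) 1) :
    phiX1 q u ≤ phiY u := by
  have hv := frac2_mem hu
  have hw := w1_pos hq0 hu
  rw [phiX1, phiY, div_le_div_iff₀ hw hv.1]
  obtain ⟨hu0, hu1⟩ := hu
  by_cases h : u ≤ 1/2
  · rw [frac2_low h, w1_low h]
    by_cases hql : q < 2*u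
    · rw [if_pos hql]; nlinarith
    · rw [if_neg hql]; nlinarith
  · rw [frac2_high h, w1_high h]; push_neg at h
    by_cases hql : q < 2*u - 1
    · rw [if_pos hql]; nlinarith
    · rw [if_neg hql]; push_neg at hql; nlinarith

lemma coupling1_sum {q u : ℝ} (hq0 : 0 < q) (hq1 : q < 1) (hu : u ∈ Ioc (0:ℝ) 1)
    (hv : frac2 u ≤ q) : 4/q ≤ phiX1 q u + phiY u := by
  have hv0 := (frac2_mem hu).1
  obtain ⟨hu0, hu1⟩ := hu
  rw [phiX1, phiY]
  by_cases h : u ≤ 1/2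
  · rw [frac2_low h] at hv hv0 ⊢
    rw [w1_low h, if_neg (not_lt.mpr hv)]
    have e1 : 1/u + 2/(2*u) = 2/u := by
      field_simp
      ring
    rw [e1]
    rw [div_le_div_iff₀ hq0 (by linarith)]
    nlinarith
  · rw [frac2_high h] at hv hv0 ⊢
    rw [w1_high h, if_neg (not_lt.mpr (by linarith))]
    push_neg at h
    set v := 2*u - 1 with hvdef
    have hd : 0 < q - v/2 := by simp only [hvdef]; linarith
    have hqu : q + 1/2 - u = q - v/2 := by simp only [hvdef]; ring
    rw [hqu]
    have key : 4/q ≤ 1/(q - v/2) + 2/v := by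
      rw [div_add_div _ _ (ne_of_gt hd) (ne_of_gt hv0), div_le_div_iff₀ hq0 (by positivity)]
      nlinarith [sq_nonneg (q - v)]
    linarith

lemma coupling2_le {q u : ℝ} (hq0 : 0 < q) (hq1 : q < 1) (hu : u ∈ Ioc (0:ℝ) 1) :
    phiX2 q u ≤ phiY u := by
  have hv := frac2_mem hu
  have hw := w2_pos hq0 hq1 hu
  rw [phiX2, phiY, div_le_div_iff₀ hw hv.1]
  obtain ⟨hu0, hu1⟩ := hu
  obtain ⟨hv0, hv1⟩ := hv
  by_cases h : u ≤ 1/2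
  · rw [frac2_low h] at hv0 hv1 ⊢
    rw [w2_low h]
    by_cases hb1 : 2*u ≤ q
    · rw [if_pos hb1]; nlinarith
    · rw [if_neg hb1]; push_neg at hb1
      by_cases hb2 : 2*u ≤ 2*q
      · rw [if_pos hb2]; nlinarith
      · rw [if_neg hb2]; nlinarith
  · rw [frac2_high h] at hv0 hv1 ⊢
    rw [w2_high h]; push_neg at h
    by_cases hb1 : 2*u - 1 ≤ q
    · rw [if_pos hb1]; nlinarith
    · rw [if_neg hb1]; push_neg at hb1
      by_cases hb2 : 2*u - 1 ≤ 2*q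
      · rw [if_pos hb2]; nlinarith
      · rw [if_neg hb2]; nlinarith

/-- key algebraic inequality for the middle branch of coupling 2. -/
lemma sum2_b2 {q v : ℝ} (hq0 : 0 < q) (hq1 : q < 1) (h1 : q < v) (h2 : v ≤ 2*q) (h3 : v ≤ 1) :
    1/(1+q-v) + 2/v ≤ (2+q)/q := by
  have hd : 0 < 1+q-v := by linarith
  have hv0 : 0 < v := by linarith
  rw [div_add_div _ _ (ne_of_gt hd) (ne_of_gt hv0), div_le_div_iff₀ (by positivity) hq0]
  rcases le_or_gt q (1/2) with hc | hc
  · nlinarith [mul_nonneg (sub_nonneg.mpr h1.le) (sub_nonneg.mpr h2),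
      mul_pos hq0 (sub_pos.mpr h1)]
  · nlinarith [mul_nonneg (sub_nonneg.mpr h1.le) (sub_nonneg.mpr h3),
      mul_pos hq0 (sub_pos.mpr h1)]

/-- key algebraic inequality for the top branch of coupling 2 (antithetic half). -/
lemma sum2_b3 {q v : ℝ} (hq0 : 0 < q) (h1 : 2*q < v) (h3 : v ≤ 1) :
    2/(2-v) + 2/v ≤ (2+q)/q := by
  have hd : 0 < 2-v := by linarith
  have hv0 : 0 < v := by linarith
  rw [div_add_div _ _ (ne_of_gt hd) (ne_of_gt hv0), div_le_div_iff₀ (by positivity) hq0]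
  nlinarith [mul_nonneg (sub_nonneg.mpr h1.le) (sub_nonneg.mpr h3),
    mul_nonneg (show (0:ℝ) ≤ 1 - 2*q by linarith) hv0.le, sq_nonneg q]

lemma coupling2_sum {q u : ℝ} (hq0 : 0 < q) (hq1 : q < 1) (hu : u ∈ Ioc (0:ℝ) 1)
    (hv : q < frac2 u) : phiX2 q u + phiY u ≤ 1 + 2/q := by
  have hv1 := (frac2_mem hu).2
  obtain ⟨hu0, hu1⟩ := hu
  have e0 : 1 + 2/q = (2+q)/q := by field_simp; ring
  rw [phiX2, phiY, e0]
  by_cases h : u ≤ 1/2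
  · rw [frac2_low h] at hv hv1 ⊢
    rw [w2_low h, if_neg (not_le.mpr hv)]
    by_cases hb2 : 2*u ≤ 2*q
    · rw [if_pos hb2]
      exact sum2_b2 hq0 hq1 hv hb2 hv1
    · push_neg at hb2
      rw [if_neg (not_le.mpr hb2)]
      have e1 : (1:ℝ)/u = 2/(2*u) := by
        field_simp
      calc 1/u + 2/(2*u) = 2/(2*u) + 2/(2*u) := by rw [e1]
        _ ≤ (2+q)/q := by
          have h4q : 4/(2*u) ≤ (2+q)/q := by
            rw [div_le_div_iff₀ (by linarith) hq0]
            nlinarith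
          have : 2/(2*u) + 2/(2*u) = 4/(2*u) := by ring
          linarith [this ▸ h4q]
  · rw [frac2_high h] at hv hv1 ⊢
    rw [w2_high h, if_neg (not_le.mpr hv)]
    push_neg at h
    by_cases hb2 : 2*u - 1 ≤ 2*q
    · rw [if_pos hb2]
      have e3 : q+2-2*u = 1+q-(2*u-1) := by ring
      rw [e3]
      exact sum2_b2 hq0 hq1 hv hb2 hv1
    · push_neg at hb2
      rw [if_neg (not_le.mpr hb2)]
      have e4 : (3:ℝ)/2 - u = (2-(2*u-1))/2 := by ring
      rw [e4]
      have e5 : (1:ℝ)/((2-(2*u-1))/2) = 2/(2-(2*u-1)) := by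
        rw [div_div_eq_mul_div, one_mul]
      rw [e5]
      exact sum2_b3 hq0 hb2 hv1

section Generic

variable {μ : Measure Ω} [IsProbabilityMeasure μ]

lemma hasCDF_ae_ge {X : Ω → ℝ} {F : ℝ → ℝ} (h : HasCDF μ X F) {a : ℝ}
    (hF : ∀ x, x < a → F x = 0) : ∀ᵐ ω ∂μ, a ≤ X ω := by
  have hnull : ∀ x, x < a → μ {ω | X ω ≤ x} = 0 := by
    intro x hx
    have h1 : (μ {ω | X ω ≤ x}).toReal = 0 := by
      have := h.2 x
      rw [distFun] at this
      rw [this, hF x hx]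
    rcases (ENNReal.toReal_eq_zero_iff _).mp h1 with h2 | h2
    · exact h2
    · exact absurd h2 (measure_ne_top μ _)
  have hun : {ω | X ω < a} = ⋃ n : ℕ, {ω | X ω ≤ a - 1/(n+1)} := by
    ext ω
    simp only [mem_setOf_eq, mem_iUnion]
    constructor
    · intro hlt
      obtain ⟨n, hn⟩ := exists_nat_one_div_lt (sub_pos.mpr hlt)
      exact ⟨n, by linarith⟩
    · rintro ⟨n, hn⟩
      have : (0:ℝ) < 1/(n+1) := by positivity
      linarith
  rw [ae_iff]
  have : {ω | ¬ a ≤ X ω} = {ω | X ω < a} := by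
    ext ω; simp [not_le]
  rw [this, hun]
  refine measure_iUnion_null (fun n => hnull _ ?_)
  have : (0:ℝ) < 1/(n+1) := by positivity
  linarith

lemma paretoF_zero {x : ℝ} (hx : x < 1) : paretoF x = 0 := if_neg (not_le.mpr hx)
lemma paretoG_zero {y : ℝ} (hy : y < 2) : paretoG y = 0 := if_neg (not_le.mpr hy)

lemma ae_one_le {X : Ω → ℝ} (h : HasCDF μ X paretoF) : ∀ᵐ ω ∂μ, 1 ≤ X ω :=
  hasCDF_ae_ge h (fun _ => paretoF_zero)

lemma ae_two_le {Y : Ω → ℝ} (h : HasCDF μ Y paretoG) : ∀ᵐ ω ∂μ, 2 ≤ Y ω :=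
  hasCDF_ae_ge h (fun _ => paretoG_zero)

lemma measure_le_of_ae_imp {s t u : Set Ω} (hu : ∀ᵐ ω ∂μ, ω ∈ u)
    (h : ∀ ω, ω ∈ u → ω ∈ s → ω ∈ t) : μ s ≤ μ t :=
  measure_mono_ae (hu.mono (fun ω hω hs => h ω hω hs))

variable {p q : ℝ}

/-- For any ordered coupling and `t > 4/q`, the cdf of the sum at `t` exceeds `p`. -/
lemma sum_cdf_gt {X Y : Ω → ℝ} (hc : OrderedCoupling μ paretoF paretoG X Y)
    (hp0 : 0 < p) (hp1 : p < 1) (hq : q = 1 - p) {t : ℝ} (ht : 4/q < t) :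
    p < distFun μ (fun ω => X ω + Y ω) t := by
  have hq0 : 0 < q := by rw [hq]; linarith
  have hq1 : q ≤ 1 := by rw [hq]; linarith
  have ht4 : 4 ≤ 4/q := by
    rw [le_div_iff₀ hq0]; linarith
  have ht0 : 0 < t := by linarith
  -- μ {Y ≤ t/2} ≤ μ {X + Y ≤ t}
  have hmono : μ {ω | Y ω ≤ t/2} ≤ μ {ω | X ω + Y ω ≤ t} := by
    refine measure_le_of_ae_imp (u := {ω | X ω ≤ Y ω}) hc.2.2 (fun ω h1 h2 => ?_)
    simp only [mem_setOf_eq] at *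
    linarith
  have hG : distFun μ Y (t/2) = 1 - 4/t := by
    rw [hc.2.1.2, paretoG, if_pos (by linarith)]
    have he : (2:ℝ)/(t/2) = 4/t := by
      rw [div_div_eq_mul_div]; norm_num
    rw [he]
  have h1 : p < 1 - 4/t := by
    have h2 : 4/t < q := by
      rw [div_lt_iff₀ ht0]
      calc (4:ℝ) = (4/q) * q := by field_simp
        _ < t * q := by
          apply mul_lt_mul_of_pos_right ht hq0
        _ = q * t := mul_comm t q
    rw [hq] at h2
    linarith
  calc p < 1 - 4/t := h1
    _ = distFun μ Y (t/2) := hG.symm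
    _ ≤ distFun μ (fun ω => X ω + Y ω) t := by
      rw [distFun, distFun]
      exact (ENNReal.toReal_le_toReal (measure_ne_top μ _) (measure_ne_top μ _)).mpr hmono

/-- cdf of the sum vanishes below 3. -/
lemma sum_cdf_lt3 {X Y : Ω → ℝ} (hc : OrderedCoupling μ paretoF paretoG X Y)
    {t : ℝ} (ht : t < 3) : distFun μ (fun ω => X ω + Y ω) t = 0 := by
  have h0 : μ {ω | X ω + Y ω ≤ t} = 0 := by
    rw [← le_zero_iff, ← measure_empty (μ := μ)]
    refine measure_le_of_ae_imp (u := {ω | 1 ≤ X ω ∧ 2 ≤ Y ω})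
      ?_ (fun ω h1 h2 => ?_)
    · filter_upwards [ae_one_le hc.1, ae_two_le hc.2.1] with ω ha hb
      exact ⟨ha, hb⟩
    · simp only [mem_setOf_eq] at h1 h2
      exact absurd h2 (by push_neg; obtain ⟨ha, hb⟩ := h1; linarith)
  rw [distFun, h0, ENNReal.toReal_zero]

lemma quantR_sum_le {X Y : Ω → ℝ} (hc : OrderedCoupling μ paretoF paretoG X Y)
    (hp0 : 0 < p) (hp1 : p < 1) (hq : q = 1 - p) :
    quantR (distFun μ (fun ω => X ω + Y ω)) p ≤ 4/q := by
  have hbdd : BddBelow {t : ℝ | p < distFun μ (fun ω => X ω + Y ω) t} := by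
    refine ⟨3, fun t ht => ?_⟩
    by_contra hlt
    push_neg at hlt
    rw [mem_setOf_eq, sum_cdf_lt3 hc hlt] at ht
    linarith
  have hsub : Ioi (4/q) ⊆ {t : ℝ | p < distFun μ (fun ω => X ω + Y ω) t} :=
    fun t ht => sum_cdf_gt hc hp0 hp1 hq ht
  calc quantR (distFun μ (fun ω => X ω + Y ω)) p ≤ sInf (Ioi (4/q)) :=
        csInf_le_csInf hbdd (nonempty_Ioi) hsub
    _ = 4/q := csInf_Ioi

lemma quantL_sum_ge {X Y : Ω → ℝ} (hc : OrderedCoupling μ paretoF paretoG X Y)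
    (hp0 : 0 < p) (hp1 : p < 1) (hq : q = 1 - p) :
    1 + 2/q ≤ quantL (distFun μ (fun ω => X ω + Y ω)) p := by
  have hq0 : 0 < q := by rw [hq]; linarith
  -- nonemptiness
  have hne : {t : ℝ | p ≤ distFun μ (fun ω => X ω + Y ω) t}.Nonempty := by
    have hmonoset : Monotone (fun n : ℕ => {ω | X ω + Y ω ≤ (n:ℝ)}) := by
      intro m n hmn ω hω
      simp only [mem_setOf_eq] at *
      exact hω.trans (by exact_mod_cast hmn)
    have huniv : (⋃ n : ℕ, {ω | X ω + Y ω ≤ (n:ℝ)}) = univ := by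
      ext ω
      simp only [mem_iUnion, mem_setOf_eq, mem_univ, iff_true]
      exact exists_nat_ge (X ω + Y ω)
    have htend := tendsto_measure_iUnion_atTop (μ := μ) hmonoset
    rw [huniv, measure_univ] at htend
    have hplt : ENNReal.ofReal p < 1 := by
      rw [← ENNReal.ofReal_one]
      exact ENNReal.ofReal_lt_ofReal_iff_of_nonneg hp0.le |>.mpr hp1
    have hev := htend.eventually (eventually_gt_nhds hplt)
    obtain ⟨n, hn⟩ := hev.exists
    refine ⟨n, ?_⟩
    simp only [mem_setOf_eq, distFun]
    have : ENNReal.ofReal p ≤ μ {ω | X ω + Y ω ≤ (n:ℝ)} := le_of_lt hn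
    calc p = (ENNReal.ofReal p).toReal := (ENNReal.toReal_ofReal hp0.le).symm
      _ ≤ (μ {ω | X ω + Y ω ≤ (n:ℝ)}).toReal :=
          ENNReal.toReal_mono (measure_ne_top μ _) this
  refine le_csInf hne ?_
  intro t ht
  simp only [mem_setOf_eq] at ht
  by_contra hlt
  push_neg at hlt
  -- show distFun sum t < p
  have hmono : μ {ω | X ω + Y ω ≤ t} ≤ μ {ω | Y ω ≤ t - 1} := by
    refine measure_le_of_ae_imp (u := {ω | 1 ≤ X ω}) (ae_one_le hc.1) (fun ω h1 h2 => ?_)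
    simp only [mem_setOf_eq] at *
    linarith
  have hGlt : distFun μ Y (t-1) < p := by
    rw [hc.2.1.2]
    rcases lt_or_ge (t-1) 2 with h2 | h2
    · rw [paretoG_zero h2]; exact hp0
    · rw [paretoG, if_pos h2]
      have ht10 : (0:ℝ) < t - 1 := by linarith
      have : q < 2/(t-1) := by
        rw [lt_div_iff₀ ht10]
        calc q * (t-1) < q * (2/q) := by
              apply mul_lt_mul_of_pos_left _ hq0
              linarith
          _ = 2 := by field_simp
      rw [hq] at this
      linarith
  have : distFun μ (fun ω => X ω + Y ω) t < p := by
    calc distFun μ (fun ω => X ω + Y ω) t ≤ distFun μ Y (t-1) := by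
          rw [distFun, distFun]
          exact (ENNReal.toReal_le_toReal (measure_ne_top μ _) (measure_ne_top μ _)).mpr hmono
      _ < p := hGlt
  linarith

end Generic


section Specific

variable (μ : Measure Ω) (hμ : Atomless μ) [IsProbabilityMeasure μ]

lemma distFun_comp {φ : ℝ → ℝ} (hφ : Measurable φ) (x : ℝ) :
    distFun μ (fun ω => φ (unif μ hμ ω)) x
      = (volume ({u | φ u ≤ x} ∩ Ioc 0 1)).toReal := by
  rw [distFun]
  congr 1
  have h1 : {ω | φ (unif μ hμ ω) ≤ x} = unif μ hμ ⁻¹' {u | φ u ≤ x} := rfl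
  have hA : MeasurableSet {u : ℝ | φ u ≤ x} := hφ measurableSet_Iic
  rw [h1, unif_preimage μ hμ hA]

lemma paretoF_nonneg (x : ℝ) : 0 ≤ paretoF x := by
  rw [paretoF]
  by_cases h : 1 ≤ x
  · rw [if_pos h]
    have : 1/x ≤ 1 := by
      rw [div_le_one (by linarith)]; linarith
    linarith
  · rw [if_neg h]

lemma paretoG_nonneg (y : ℝ) : 0 ≤ paretoG y := by
  rw [paretoG]
  by_cases h : 2 ≤ y
  · rw [if_pos h]
    have : 2/y ≤ 1 := by
      rw [div_le_one (by linarith)]; linarith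
    linarith
  · rw [if_neg h]

lemma hasCDF_Y : HasCDF μ (fun ω => phiY (unif μ hμ ω)) paretoG := by
  refine ⟨measurable_phiY.comp (measurable_unif μ hμ), fun y => ?_⟩
  rw [distFun_comp μ hμ measurable_phiY y]
  have hv : volume ({u | phiY u ≤ y} ∩ Ioc 0 1) = ENNReal.ofReal (paretoG y) := by
    have h := vol_pareto (W := frac2) (c := 2) (by norm_num)
      (fun u hu => (frac2_mem hu).1) (fun u hu => (frac2_mem hu).2)
      (fun s h0 h1 => vol_frac2_surv h0 h1) y
    rw [paretoG]
    exact h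
  rw [hv, ENNReal.toReal_ofReal (paretoG_nonneg y)]

lemma hasCDF_X1 {q : ℝ} (hq0 : 0 < q) (hq1 : q < 1) :
    HasCDF μ (fun ω => phiX1 q (unif μ hμ ω)) paretoF := by
  refine ⟨(measurable_phiX1 q).comp (measurable_unif μ hμ), fun x => ?_⟩
  rw [distFun_comp μ hμ (measurable_phiX1 q) x]
  have hv : volume ({u | phiX1 q u ≤ x} ∩ Ioc 0 1) = ENNReal.ofReal (paretoF x) := by
    have h := vol_pareto (W := w1 q) (c := 1) one_pos
      (fun u hu => w1_pos hq0 hu) (fun u hu => w1_le_one hq1 hu)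
      (fun s h0 h1 => w1_surv hq0 hq1 h0 h1) x
    rw [paretoF]
    exact h
  rw [hv, ENNReal.toReal_ofReal (paretoF_nonneg x)]

lemma hasCDF_X2 {q : ℝ} (hq0 : 0 < q) (hq1 : q < 1) :
    HasCDF μ (fun ω => phiX2 q (unif μ hμ ω)) paretoF := by
  refine ⟨(measurable_phiX2 q).comp (measurable_unif μ hμ), fun x => ?_⟩
  rw [distFun_comp μ hμ (measurable_phiX2 q) x]
  have hv : volume ({u | phiX2 q u ≤ x} ∩ Ioc 0 1) = ENNReal.ofReal (paretoF x) := by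
    have h := vol_pareto (W := w2 q) (c := 1) one_pos
      (fun u hu => w2_pos hq0 hq1 hu) (fun u hu => w2_le_one hq0 hq1 hu)
      (fun s h0 h1 => w2_surv hq0 hq1 h0 h1) x
    rw [paretoF]
    exact h
  rw [hv, ENNReal.toReal_ofReal (paretoF_nonneg x)]

lemma ae_unif_mem : ∀ᵐ ω ∂μ, unif μ hμ ω ∈ Ioc (0:ℝ) 1 := by
  rw [ae_iff]
  have h1 : {ω | ¬ unif μ hμ ω ∈ Ioc (0:ℝ) 1} = unif μ hμ ⁻¹' (Ioc (0:ℝ) 1)ᶜ := rfl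
  rw [h1, unif_preimage μ hμ measurableSet_Ioc.compl, compl_inter_self]
  exact measure_empty

lemma coupling1_ordered {q : ℝ} (hq0 : 0 < q) (hq1 : q < 1) :
    OrderedCoupling μ paretoF paretoG
      (fun ω => phiX1 q (unif μ hμ ω)) (fun ω => phiY (unif μ hμ ω)) := by
  refine ⟨hasCDF_X1 μ hμ hq0 hq1, hasCDF_Y μ hμ, ?_⟩
  filter_upwards [ae_unif_mem μ hμ] with ω hω
  exact coupling1_le hq0 hq1 hω

lemma coupling2_ordered {q : ℝ} (hq0 : 0 < q) (hq1 : q < 1) :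
    OrderedCoupling μ paretoF paretoG
      (fun ω => phiX2 q (unif μ hμ ω)) (fun ω => phiY (unif μ hμ ω)) := by
  refine ⟨hasCDF_X2 μ hμ hq0 hq1, hasCDF_Y μ hμ, ?_⟩
  filter_upwards [ae_unif_mem μ hμ] with ω hω
  exact coupling2_le hq0 hq1 hω

lemma quantR_coupling1 {p q : ℝ} (hp0 : 0 < p) (hp1 : p < 1) (hq : q = 1 - p) :
    quantR (distFun μ (fun ω => phiX1 q (unif μ hμ ω) + phiY (unif μ hμ ω))) p = 4/q := by
  have hq0 : 0 < q := by rw [hq]; linarith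
  have hq1 : q < 1 := by rw [hq]; linarith
  have hc := coupling1_ordered μ hμ hq0 hq1
  refine le_antisymm (quantR_sum_le hc hp0 hp1 hq) ?_
  set H := distFun μ (fun ω => phiX1 q (unif μ hμ ω) + phiY (unif μ hμ ω)) with hH
  refine le_csInf ⟨4/q + 1, sum_cdf_gt hc hp0 hp1 hq (by linarith)⟩ ?_
  intro b hb
  simp only [mem_setOf_eq] at hb
  by_contra hlt
  push_neg at hlt
  -- the event where the sum is at least 4/q
  set E := unif μ hμ ⁻¹' ({u | frac2 u ≤ q} ∩ Ioc 0 1) with hE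
  have hA1 : MeasurableSet ({u : ℝ | frac2 u ≤ q} ∩ Ioc 0 1) :=
    (measurable_frac2 measurableSet_Iic).inter measurableSet_Ioc
  have hEmeas : MeasurableSet E := measurable_unif μ hμ hA1
  have hEvol : μ E = ENNReal.ofReal q := by
    rw [hE, unif_preimage μ hμ hA1]
    rw [inter_assoc, inter_self]
    exact vol_event1 hq0 hq1
  have hsub : {ω | phiX1 q (unif μ hμ ω) + phiY (unif μ hμ ω) ≤ b} ⊆ Eᶜ := by
    intro ω hω hmem
    obtain ⟨hfr, hIoc⟩ := hmem
    have hsum := coupling1_sum hq0 hq1 hIoc hfr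
    simp only [mem_setOf_eq] at hω
    linarith
  have hHb : H b ≤ p := by
    rw [hH, distFun]
    have h1 : μ {ω | phiX1 q (unif μ hμ ω) + phiY (unif μ hμ ω) ≤ b} ≤ μ Eᶜ :=
      measure_mono hsub
    have h2 : μ Eᶜ = ENNReal.ofReal (1 - q) := by
      rw [measure_compl hEmeas (measure_ne_top μ E), measure_univ, hEvol,
        ← ENNReal.ofReal_one, ← ENNReal.ofReal_sub _ hq0.le]
    have h3 : (μ {ω | phiX1 q (unif μ hμ ω) + phiY (unif μ hμ ω) ≤ b}).toReal ≤ 1 - q := by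
      calc (μ {ω | phiX1 q (unif μ hμ ω) + phiY (unif μ hμ ω) ≤ b}).toReal
          ≤ (μ Eᶜ).toReal := ENNReal.toReal_mono (measure_ne_top μ _) h1
        _ = 1 - q := by rw [h2, ENNReal.toReal_ofReal (by linarith)]
    have hp' : 1 - q = p := by rw [hq]; ring
    rw [hp'] at h3
    exact h3
  linarith

lemma quantL_coupling2 {p q : ℝ} (hp0 : 0 < p) (hp1 : p < 1) (hq : q = 1 - p) :
    quantL (distFun μ (fun ω => phiX2 q (unif μ hμ ω) + phiY (unif μ hμ ω))) p = 1 + 2/q := by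
  have hq0 : 0 < q := by rw [hq]; linarith
  have hq1 : q < 1 := by rw [hq]; linarith
  have hc := coupling2_ordered μ hμ hq0 hq1
  refine le_antisymm ?_ (quantL_sum_ge hc hp0 hp1 hq)
  set H := distFun μ (fun ω => phiX2 q (unif μ hμ ω) + phiY (unif μ hμ ω)) with hH
  have hbdd : BddBelow {t : ℝ | p ≤ H t} := by
    refine ⟨3, fun t ht => ?_⟩
    by_contra hlt
    push_neg at hlt
    rw [mem_setOf_eq, hH, sum_cdf_lt3 hc hlt] at ht
    linarith
  refine csInf_le hbdd ?_
  -- show p ≤ H (1 + 2/q)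
  simp only [mem_setOf_eq]
  set E := unif μ hμ ⁻¹' ({u | q < frac2 u} ∩ Ioc 0 1) with hE
  have hA2 : MeasurableSet ({u : ℝ | q < frac2 u} ∩ Ioc 0 1) :=
    (measurable_frac2 measurableSet_Ioi).inter measurableSet_Ioc
  have hEvol : μ E = ENNReal.ofReal (1 - q) := by
    rw [hE, unif_preimage μ hμ hA2]
    rw [inter_assoc, inter_self]
    exact vol_event2 hq0 hq1
  have hsub : E ⊆ {ω | phiX2 q (unif μ hμ ω) + phiY (unif μ hμ ω) ≤ 1 + 2/q} := by
    intro ω hmem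
    obtain ⟨hfr, hIoc⟩ := hmem
    exact coupling2_sum hq0 hq1 hIoc hfr
  have h1 : ENNReal.ofReal (1 - q) ≤ μ {ω | phiX2 q (unif μ hμ ω) + phiY (unif μ hμ ω) ≤ 1 + 2/q} := by
    rw [← hEvol]
    exact measure_mono hsub
  rw [hH, distFun]
  calc p = 1 - q := by rw [hq]; ring
    _ = (ENNReal.ofReal (1 - q)).toReal := by
        rw [ENNReal.toReal_ofReal (by linarith)]
    _ ≤ _ := ENNReal.toReal_mono (measure_ne_top μ _) h1

end Specific

/-- VaR bounds for the two Pareto distributions with the order constraint: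
the worst-case `VaR^R_p` is `4/(1−p)` and the best-case `VaR^L_p` is
`1 + 2/(1−p)`. -/
theorem pareto_VaR_bounds
    (μ : Measure Ω) [IsProbabilityMeasure μ] (hμ : Atomless μ) :
    ∀ p ∈ Set.Ioo (0 : ℝ) 1,
      sSup {r : ℝ | ∃ X Y : Ω → ℝ, OrderedCoupling μ paretoF paretoG X Y ∧
          r = quantR (distFun μ (fun ω => X ω + Y ω)) p} = 4 / (1 - p) ∧
      sInf {r : ℝ | ∃ X Y : Ω → ℝ, OrderedCoupling μ paretoF paretoG X Y ∧
          r = quantL (distFun μ (fun ω => X ω + Y ω)) p} = 1 + 2 / (1 - p) := by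
  intro p hp
  obtain ⟨hp0, hp1⟩ := hp
  have hq0 : 0 < 1 - p := by linarith
  have hq1 : 1 - p < 1 := by linarith
  constructor
  · have hub : ∀ r ∈ {r : ℝ | ∃ X Y : Ω → ℝ, OrderedCoupling μ paretoF paretoG X Y ∧
        r = quantR (distFun μ (fun ω => X ω + Y ω)) p}, r ≤ 4 / (1 - p) := by
      rintro r ⟨X, Y, hc, rfl⟩
      exact quantR_sum_le hc hp0 hp1 rfl
    have hmem : 4 / (1 - p) ∈ {r : ℝ | ∃ X Y : Ω → ℝ, OrderedCoupling μ paretoF paretoG X Y ∧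
        r = quantR (distFun μ (fun ω => X ω + Y ω)) p} := by
      refine ⟨fun ω => phiX1 (1-p) (unif μ hμ ω), fun ω => phiY (unif μ hμ ω),
        coupling1_ordered μ hμ hq0 hq1, ?_⟩
      exact (quantR_coupling1 μ hμ hp0 hp1 rfl).symm
    exact le_antisymm (csSup_le ⟨_, hmem⟩ hub) (le_csSup ⟨4/(1-p), hub⟩ hmem)
  · have hlb : ∀ r ∈ {r : ℝ | ∃ X Y : Ω → ℝ, OrderedCoupling μ paretoF paretoG X Y ∧
        r = quantL (distFun μ (fun ω => X ω + Y ω)) p}, 1 + 2/(1-p) ≤ r := by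
      rintro r ⟨X, Y, hc, rfl⟩
      exact quantL_sum_ge hc hp0 hp1 rfl
    have hmem : 1 + 2/(1-p) ∈ {r : ℝ | ∃ X Y : Ω → ℝ, OrderedCoupling μ paretoF paretoG X Y ∧
        r = quantL (distFun μ (fun ω => X ω + Y ω)) p} := by
      refine ⟨fun ω => phiX2 (1-p) (unif μ hμ ω), fun ω => phiY (unif μ hμ ω),
        coupling2_ordered μ hμ hq0 hq1, ?_⟩
      exact (quantL_coupling2 μ hμ hp0 hp1 rfl).symm
    exact le_antisymm (csInf_le ⟨1 + 2/(1-p), hlb⟩ hmem) (le_csInf ⟨_, hmem⟩ hlb)
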